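/- arXiv:1201.6050 — 3 statements merged into one kernel-verified Lean document; each statement's English description precedes it below -/
import Mathlib

section
/- Let 𝕋 be the semi-homogeneous tree in which vertices alternate between valence 1+q and valence 1+q' (q, q' ≥ 2), let 𝔸 ≅ ℤ be an apartment (doubly infinite geodesic) with the vertex s of 𝔸 having valence 1+q if s is even and 1+q' if s is odd, and let ρ' be the retraction of 𝕋 onto 𝔸 centered at the end −∞ of 𝔸. For r ≥ 0 and m ∈ ℤ let n_r(m) be the number of vertices z at distance r from 0 with ρ'(z) = m. If m is odd assume q = q'. Then n_r(m) = n_r(−m)·(√(qq'))^m. -/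
open scoped Classical

/-- The number of vertices `z` at distance `r` from `0` in the semi-homogeneous tree
`𝕋` (valences `1+q` at even vertices and `1+q'` at odd ones along the apartment
`𝔸 ≅ ℤ`) with retraction `ρ'(z) = m` (retraction centered at the end `-∞`), computed
from the counting formulas of Section 5.9: `z` follows `𝔸` up to `s = (m-r)/2` and
then branches off, the number of choices at a vertex of parity `p` being `q - 1`,
`q' - 1` or `q`, `q'` according to the cases. -/
noncomputable def treeCount (q q' : ℝ) (r : ℕ) (m : ℤ) : ℝ :=
  if m = (r : ℤ) then ∏ k ∈ Finset.range r, (if Even k then q else q')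
  else if m = -(r : ℤ) then 1
  else if -(r : ℤ) < m ∧ m < (r : ℤ) ∧ (m - (r : ℤ)) % 2 = 0 then
    ((if Even ((m - (r : ℤ)) / 2) then q else q') - 1) *
      ∏ k ∈ Finset.range ((((r : ℤ) + m) / 2 - 1).toNat),
        (if Even ((m - (r : ℤ)) / 2 + 1 + (k : ℤ)) then q else q')
  else 0

noncomputable def prodF (q q' : ℝ) (a : ℤ) (n : ℕ) : ℝ :=
  ∏ k ∈ Finset.range n, (if Even (a + (k : ℤ)) then q else q')

lemma fpar_pair (q q' : ℝ) (a : ℤ) :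
    (if Even a then q else q') * (if Even (a + 1) then q else q') = q * q' := by
  by_cases h : Even a
  · simp [h, Int.even_add_one]
  · simp [h, Int.even_add_one, mul_comm]

lemma prodF_add_two (q q' : ℝ) (a : ℤ) (n : ℕ) :
    prodF q q' a (n + 2) = prodF q q' a n * (q * q') := by
  rw [prodF, Finset.prod_range_succ, Finset.prod_range_succ, ← prodF, mul_assoc]
  congr 1
  have h := fpar_pair q q' (a + n)
  push_cast
  rw [show a + ((n : ℤ) + 1) = a + n + 1 by ring]
  exact h

lemma prodF_eq (q q' : ℝ) (a : ℤ) (n : ℕ) :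
    prodF q q' a n = (q * q') ^ (n / 2) * (if Odd n then (if Even a then q else q') else 1) := by
  induction n using Nat.twoStepInduction with
  | zero => simp [prodF]
  | one => simp [prodF]
  | more n ih _ =>
    rw [prodF_add_two, ih]
    have h2 : (n + 2) / 2 = n / 2 + 1 := by omega
    have h3 : Odd (n + 2) ↔ Odd n := by simp [Nat.odd_iff]
    rw [h2]
    simp only [h3, pow_succ]
    ring

lemma prodRel (q q' : ℝ) (hq : 2 ≤ q) (hq' : 2 ≤ q') (a : ℤ) (c n : ℕ)
    (hn : Odd n → q = q') :
    prodF q q' a (c + n) = prodF q q' (a - n) c * Real.sqrt (q * q') ^ (n : ℤ) := by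
  have hq0 : (0:ℝ) ≤ q := by linarith
  have hq'0 : (0:ℝ) ≤ q' := by linarith
  have hqq : (0:ℝ) ≤ q * q' := by positivity
  rcases Nat.even_or_odd n with he | ho
  · obtain ⟨j, hj⟩ := he
    have hsq : Real.sqrt (q * q') ^ (n : ℤ) = (q * q') ^ j := by
      rw [zpow_natCast, hj, show j + j = 2 * j by ring, pow_mul, Real.sq_sqrt hqq]
    rw [hsq, prodF_eq, prodF_eq]
    have hoc : Odd (c + n) ↔ Odd c := by
      simp only [Nat.odd_iff]; omega
    have hdiv : (c + n) / 2 = c / 2 + j := by omega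
    have hen : Even (n : ℤ) := ⟨j, by push_cast [hj]; ring⟩
    have hfa : Even (a - (n : ℤ)) ↔ Even a := by
      simp [Int.even_sub, hen]
    have hfp : (if Even (a - (n : ℤ)) then q else q') = (if Even a then q else q') :=
      if_congr hfa rfl rfl
    rw [hdiv, pow_add, hfp]
    simp only [hoc]
    ring
  · have hqe := hn ho
    subst hqe
    have hprod : ∀ (b : ℤ) (k : ℕ), prodF q q b k = q ^ k := by
      intro b k; simp [prodF]
    have hsq : Real.sqrt (q * q) = q := Real.sqrt_mul_self hq0
    rw [hprod, hprod, hsq, zpow_natCast, pow_add]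

lemma stmt8_aux (q q' : ℝ) (hq : 2 ≤ q) (hq' : 2 ≤ q') (r : ℕ) (m : ℤ)
    (hm : 0 ≤ m) (hodd : Odd m → q = q') :
    treeCount q q' r m = treeCount q q' r (-m) * Real.sqrt (q * q') ^ m := by
  have hq0 : (0:ℝ) ≤ q := by linarith
  by_cases hsupp : m ≤ (r : ℤ) ∧ (m - (r : ℤ)) % 2 = 0
  · obtain ⟨hmr, hpar⟩ := hsupp
    obtain ⟨t, ht⟩ : ∃ t : ℕ, m = (r : ℤ) - 2 * t := ⟨((r - m) / 2).toNat, by omega⟩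
    have h2t : 2 * t ≤ r := by omega
    by_cases ht0 : t = 0
    · -- m = r
      have hmr' : m = (r : ℤ) := by omega
      subst hmr'
      have hcast : ∏ k ∈ Finset.range r, (if Even k then q else q') = prodF q q' 0 r := by
        unfold prodF
        refine Finset.prod_congr rfl fun k _ => ?_
        simp [Int.even_coe_nat]
      have hkey := prodRel q q' hq hq' 0 0 r
        (fun h => hodd (by simpa [Int.odd_coe_nat] using h))
      simp only [Nat.zero_add, zero_add] at hkey
      have hP0 : prodF q q' (0 - (r : ℤ)) 0 = 1 := by simp [prodF]
      rw [hP0, one_mul] at hkey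
      by_cases hr0 : r = 0
      · subst hr0; simp [treeCount]
      · have hA' : ¬(-(r : ℤ) = (r : ℤ)) := by omega
        rw [treeCount, treeCount, if_pos rfl, if_neg hA', if_pos rfl, one_mul,
          hcast, hkey]
    · -- 0 < t, middle branch on both sides
      have ht1 : 1 ≤ t := by omega
      have hr2 : 2 ≤ r := by omega
      have hA : ¬(m = (r : ℤ)) := by omega
      have hB : ¬(m = -(r : ℤ)) := by omega
      have hC : -(r : ℤ) < m ∧ m < (r : ℤ) ∧ (m - (r : ℤ)) % 2 = 0 := ⟨by omega, by omega, by omega⟩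
      have hA' : ¬(-m = (r : ℤ)) := by omega
      have hB' : ¬(-m = -(r : ℤ)) := by omega
      have hC' : -(r : ℤ) < -m ∧ -m < (r : ℤ) ∧ (-m - (r : ℤ)) % 2 = 0 := ⟨by omega, by omega, by omega⟩
      rw [treeCount, treeCount, if_neg hA, if_neg hB, if_pos hC,
        if_neg hA', if_neg hB', if_pos hC']
      have e1 : (m - (r : ℤ)) / 2 = -(t : ℤ) := by omega
      have e2 : (((r : ℤ) + m) / 2 - 1).toNat = r - t - 1 := by omega
      have e3 : (-m - (r : ℤ)) / 2 = (t : ℤ) - r := by omega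
      have e4 : (((r : ℤ) + -m) / 2 - 1).toNat = t - 1 := by omega
      rw [e1, e2, e3, e4]
      have hpre : (if Even (-(t : ℤ)) then q else q') = (if Even ((t : ℤ) - r) then q else q') := by
        rcases Int.even_or_odd m with he | ho
        · refine if_congr ?_ rfl rfl
          rw [Int.even_iff] at he ⊢
          rw [Int.even_iff]
          omega
        · rw [hodd ho]; simp
      have hp1 : ∏ k ∈ Finset.range (r - t - 1), (if Even (-(t : ℤ) + 1 + (k : ℤ)) then q else q')
          = prodF q q' (1 - t) (r - t - 1) := by
        unfold prodF
        refine Finset.prod_congr rfl fun k _ => ?_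
        rw [show -(t : ℤ) + 1 + k = 1 - t + k by ring]
      have hp2 : ∏ k ∈ Finset.range (t - 1), (if Even ((t : ℤ) - r + 1 + (k : ℤ)) then q else q')
          = prodF q q' (1 + t - r) (t - 1) := by
        unfold prodF
        refine Finset.prod_congr rfl fun k _ => ?_
        rw [show (t : ℤ) - r + 1 + k = 1 + t - r + k by ring]
      have hkey := prodRel q q' hq hq' (1 - t) (t - 1) (r - 2 * t)
        (fun h => hodd (by
          have : m = ((r - 2 * t : ℕ) : ℤ) := by omega
          rw [this]; exact (Int.odd_coe_nat _).mpr h))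
      have hc1 : t - 1 + (r - 2 * t) = r - t - 1 := by omega
      have hc2 : (1 : ℤ) - t - ((r - 2 * t : ℕ) : ℤ) = 1 + t - r := by omega
      have hc3 : ((r - 2 * t : ℕ) : ℤ) = m := by omega
      rw [hc1, hc2, hc3] at hkey
      rw [hpre, hp1, hp2, hkey]
      ring
  · have hA : ¬(m = (r : ℤ)) := by omega
    have hB : ¬(m = -(r : ℤ)) := by omega
    have hC : ¬(-(r : ℤ) < m ∧ m < (r : ℤ) ∧ (m - (r : ℤ)) % 2 = 0) := by omega
    have hA' : ¬(-m = (r : ℤ)) := by omega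
    have hB' : ¬(-m = -(r : ℤ)) := by omega
    have hC' : ¬(-(r : ℤ) < -m ∧ -m < (r : ℤ) ∧ (-m - (r : ℤ)) % 2 = 0) := by omega
    rw [treeCount, treeCount, if_neg hA, if_neg hB, if_neg hC,
      if_neg hA', if_neg hB', if_neg hC']
    simp

/-- Proposition 5.9: in the semi-homogeneous tree of valences `1+q`, `1+q'`, with the
retraction `ρ'` onto the apartment `𝔸` centered at `-∞`, the number `n_r(m)` of
vertices at distance `r` from `0` retracting to `m` satisfies
`n_r(m) = n_r(-m) · (√(q q'))^m` (assuming `q = q'` when `m` is odd). -/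
theorem stmt8 (q q' : ℝ) (hq : 2 ≤ q) (hq' : 2 ≤ q') (r : ℕ) (m : ℤ)
    (hodd : Odd m → q = q') :
    treeCount q q' r m = treeCount q q' r (-m) * Real.sqrt (q * q') ^ m := by
  rcases le_or_gt 0 m with hm | hm
  · exact stmt8_aux q q' hq hq' r m hm hodd
  · have hS0 : (0:ℝ) < Real.sqrt (q * q') := Real.sqrt_pos.mpr (by nlinarith)
    have h2 := stmt8_aux q q' hq hq' r (-m) (by omega)
      (fun h => hodd (by simpa using h))
    rw [neg_neg] at h2
    rw [h2, mul_assoc, ← zpow_add₀ (ne_of_gt hS0), neg_add_cancel, zpow_zero, mul_one]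
end

section
/- Let M be an indecomposable affine generalized Cartan matrix with smallest positive imaginary root δ = Σ_i a_i α_i, where all a_i ∈ ℤ_{>0}, and suppose δ(α_j^∨) = 0 for all j. Fix λ ∈ Y^{++}. Then (λ − Q_+^∨) ∩ Y^{++} is contained in {y ∈ Y^{++} : δ(y) = δ(λ)}, and the image of this set in the quotient V/ℝc (where ℝc = ∩_i Ker α_i) is finite; consequently (λ − Q_+^∨) ∩ Y^{++} is a finite union of sets of the form μ − ℤ_{≥0}·c with μ ∈ Y^{++}. -/
/-!
Since `δ` kills every coroot, `δ(y) = δ(λ)` on `S = (λ - Q_+^∨) ∩ Y^{++}`; as `δ = Σ aᵢαᵢ` with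
`aᵢ ≥ 1` and `y` is dominant, this pins every `α_j(y)` to `[0, δ(λ)]`. Write `y = λ - Σ nᵢαᵢ^∨`
and `c = Σ bᵢαᵢ^∨`. Since `ℝc = ∩ Ker αᵢ` and the coroots are independent, the map
`m ↦ ((α_j(Σ mᵢαᵢ^∨))_j, m_{i₀})` is injective, so bounding one coordinate `n_{i₀}` bounds all
of `n`. Subtracting from `n` the largest multiple `k b` with `k b ≤ n` leaves a vector with some
`n_{i₀} < b_{i₀}`, and `y = μ - k c` for the corresponding `μ ∈ S`: there are finitely many such
`μ`, and `S` is the union of their `c`-strings.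
-/

open Set Bornology

theorem finite_setOf_natCast_mem_of_isBounded {I : Type*} [Fintype I] {B : Set (I → ℝ)}
    (hB : IsBounded B) : {n : I → ℕ | (fun i => (n i : ℝ)) ∈ B}.Finite := by
  obtain ⟨r, hr⟩ := (Metric.isBounded_iff_subset_closedBall 0).1 hB
  refine (Set.Finite.pi fun _ => Set.finite_Iic ⌊r⌋₊).subset fun n hn i _ => ?_
  have hni : ‖(n i : ℝ)‖ ≤ r := (norm_le_pi_norm _ i).trans (mem_closedBall_zero_iff.1 (hr hn))
  exact Nat.le_floor (by simpa using hni)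

theorem LinearMap.isBounded_preimage_of_injective {𝕜 E F : Type*} [NontriviallyNormedField 𝕜]
    [CompleteSpace 𝕜] [NormedAddCommGroup E] [NormedSpace 𝕜 E] [FiniteDimensional 𝕜 E]
    [NormedAddCommGroup F] [NormedSpace 𝕜 F] (f : E →ₗ[𝕜] F) (hf : Function.Injective f)
    {s : Set F} (hs : IsBounded s) : IsBounded (f ⁻¹' s) := by
  obtain ⟨K, -, hK⟩ := f.exists_antilipschitzWith (LinearMap.ker_eq_bot.2 hf)
  exact hK.isBounded_preimage hs

theorem exists_eq_add_nsmul_and_lt {I : Type*} [Finite I] [Nonempty I] {b : I → ℕ}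
    (hb : ∀ i, 0 < b i) (n : I → ℕ) : ∃ (k : ℕ) (r : I → ℕ), n = r + k • b ∧ ∃ i, r i < b i := by
  obtain ⟨i₀, hi₀⟩ := Finite.exists_min fun i => n i / b i
  refine ⟨n i₀ / b i₀, fun i => n i - n i₀ / b i₀ * b i, funext fun i => ?_, i₀, ?_⟩
  · have := (Nat.mul_le_mul_right (b i) (hi₀ i)).trans (Nat.div_mul_le_self (n i) (b i))
    simp only [Pi.add_apply, Pi.smul_apply, smul_eq_mul]
    omega
  · show n i₀ - n i₀ / b i₀ * b i₀ < b i₀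
    rw [mul_comm, ← Nat.mod_eq_sub_mul_div]
    exact Nat.mod_lt _ (hb i₀)

theorem image_mkQ_biUnion_sub_natCast_smul {R M : Type*} [Ring R] [AddCommGroup M] [Module R M]
    (c : M) (F : Finset M) :
    (Submodule.span R {c}).mkQ '' (⋃ μ ∈ F, {x | ∃ n : ℕ, x = μ - (n : R) • c}) =
      (Submodule.span R {c}).mkQ '' ↑F := by
  apply Subset.antisymm
  · rintro _ ⟨_, hx, rfl⟩
    obtain ⟨μ, hμ, n, rfl⟩ : ∃ μ ∈ F, ∃ n : ℕ, _ = μ - (n : R) • c := by simpa using hx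
    refine ⟨μ, hμ, (Submodule.Quotient.eq _).2 ?_⟩
    simpa using Submodule.smul_mem _ (n : R) (Submodule.mem_span_singleton_self c)
  · rintro _ ⟨μ, hμ, rfl⟩
    exact ⟨μ, mem_biUnion hμ ⟨0, by simp⟩, rfl⟩

section RootDatum

variable {V : Type*} [AddCommGroup V] [Module ℝ V] {I : Type*} [Fintype I]
  (α : I → Module.Dual ℝ V) (coroot : I → V)

theorem apply_le_sum_intCast_smul_apply {a : I → ℤ} (ha : ∀ i, 0 < a i) {y : V}
    (hy : ∀ i, 0 ≤ α i y) (j : I) : α j y ≤ (∑ i, (a i : ℝ) • α i) y := by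
  simp only [LinearMap.coe_sum, LinearMap.coe_smul, Finset.sum_apply, Pi.smul_apply, smul_eq_mul]
  calc α j y ≤ a j * α j y := le_mul_of_one_le_left (hy j) (by exact_mod_cast ha j)
    _ ≤ ∑ i, a i * α i y :=
      Finset.single_le_sum (f := fun i => (a i : ℝ) * α i y)
        (fun i _ => mul_nonneg (by exact_mod_cast (ha i).le) (hy i)) (Finset.mem_univ j)

theorem injective_pi_comp_linearCombination_prod_proj (hli : LinearIndependent ℝ coroot)
    {c : V} {β : I → ℝ} (hc : c = ∑ i, β i • coroot i)
    (hker : ∀ v ∈ Submodule.span ℝ (Set.range coroot), (∀ i, α i v = 0) → ∃ s : ℝ, v = s • c)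
    {i₀ : I} (hβ : β i₀ ≠ 0) :
    Function.Injective ((LinearMap.pi fun j => (α j).comp
      (Fintype.linearCombination ℝ coroot)).prod (LinearMap.proj i₀)) := by
  set L := Fintype.linearCombination ℝ coroot
  rw [← LinearMap.ker_eq_bot, LinearMap.ker_eq_bot']
  intro m hm
  simp only [LinearMap.prod_apply, LinearMap.coe_proj, Function.prod_apply, Function.eval,
    Prod.mk_eq_zero, funext_iff, LinearMap.pi_apply, LinearMap.coe_comp, Function.comp_apply,
    Pi.zero_apply] at hm
  obtain ⟨s, hs⟩ := hker (L m)
    (Fintype.range_linearCombination ℝ coroot ▸ LinearMap.mem_range_self L m) hm.1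
  have hm_eq : m = s • β := hli.fintypeLinearCombination_injective <| by
    rw [hs, hc, map_smul, Fintype.linearCombination_apply]
  have hs0 : s = 0 := by simpa [hm_eq, hβ] using hm.2
  simp [hm_eq, hs0]

theorem finite_setOf_exists_lt_and_forall_nonneg_apply_sub (hli : LinearIndependent ℝ coroot)
    {a : I → ℤ} (ha : ∀ i, 0 < a i) {δ : Module.Dual ℝ V} (hδ : δ = ∑ i, (a i : ℝ) • α i)
    (hδc : ∀ j, δ (coroot j) = 0) {b : I → ℕ} (hb : ∀ i, 0 < b i) {c : V}
    (hc : c = ∑ i, (b i : ℝ) • coroot i)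
    (hker : ∀ v ∈ Submodule.span ℝ (Set.range coroot), (∀ i, α i v = 0) → ∃ s : ℝ, v = s • c)
    (lam : V) :
    {r : I → ℕ | (∃ i, r i < b i) ∧ ∀ j, 0 ≤ α j (lam - ∑ i, (r i : ℝ) • coroot i)}.Finite := by
  set L := Fintype.linearCombination ℝ coroot
  set box : I → Set ((I → ℝ) × ℝ) := fun i₀ =>
    univ.pi (fun j => Icc (α j lam - δ lam) (α j lam)) ×ˢ Icc 0 (b i₀ : ℝ)
  have hbox : ∀ i₀, IsBounded (box i₀) := fun i₀ =>
    ((isCompact_univ_pi fun _ => isCompact_Icc).prod isCompact_Icc).isBounded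
  refine (finite_iUnion fun i₀ => finite_setOf_natCast_mem_of_isBounded <|
    LinearMap.isBounded_preimage_of_injective _
      (injective_pi_comp_linearCombination_prod_proj α coroot hli hc hker
        (Nat.cast_ne_zero.2 (hb i₀).ne')) (hbox i₀)).subset ?_
  rintro r ⟨⟨i₀, hr⟩, hdom⟩
  set y := lam - L fun i => (r i : ℝ)
  have hy : ∀ j, 0 ≤ α j y := by simpa [y, L, Fintype.linearCombination_apply] using hdom
  have hδy : δ y = δ lam := by
    simp [y, L, Fintype.linearCombination_apply, map_sum, hδc]
  have hαy : ∀ j, α j y ≤ δ lam := fun j =>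
    hδy ▸ hδ ▸ apply_le_sum_intCast_smul_apply α ha hy j
  refine mem_iUnion.2 ⟨i₀, fun j _ => ?_, ?_⟩
  · have hj : α j (L fun i => (r i : ℝ)) = α j lam - α j y := by simp [y]
    simp only [LinearMap.prod_apply, Function.prod_apply, LinearMap.pi_apply, LinearMap.coe_comp,
      Function.comp_apply, mem_Icc]
    constructor <;> linarith [hy j, hαy j]
  · simpa using hr.le

theorem exists_finset_eq_biUnion_sub_natCast_smul [Nonempty I] {b : I → ℕ} (hb : ∀ i, 0 < b i)
    {c : V} (hc : c = ∑ i, (b i : ℝ) • coroot i) {D : Set V} (hD : ∀ y, y + c ∈ D ↔ y ∈ D)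
    (lam : V) (hfin : {r : I → ℕ | (∃ i, r i < b i) ∧ lam - ∑ i, (r i : ℝ) • coroot i ∈ D}.Finite) :
    ∃ F : Finset V, ↑F ⊆ D ∧
      {y | y ∈ D ∧ ∃ q ∈ {q | ∃ n : I → ℕ, q = ∑ i, (n i : ℝ) • coroot i}, y = lam - q} =
        ⋃ μ ∈ F, {x | ∃ n : ℕ, x = μ - (n : ℝ) • c} := by
  classical
  have hsum : ∀ (r : I → ℕ) (k : ℕ),
      lam - ∑ i, ((r + k • b) i : ℝ) • coroot i =
        (lam - ∑ i, (r i : ℝ) • coroot i) - (k : ℝ) • c := by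
    intro r k
    simp only [hc, Pi.add_apply, Pi.smul_apply, smul_eq_mul, Nat.cast_add, Nat.cast_mul, add_smul,
      Finset.sum_add_distrib, Finset.smul_sum, mul_smul]
    abel
  have hDk : ∀ y (k : ℕ), y - (k : ℝ) • c ∈ D ↔ y ∈ D := by
    intro y k
    induction k with
    | zero => simp
    | succ k ih => rw [← ih, ← hD]; congr! 1; push_cast; rw [add_smul, one_smul]; abel
  refine ⟨hfin.toFinset.image fun r => lam - ∑ i, (r i : ℝ) • coroot i, ?_, ?_⟩
  · intro μ hμ
    obtain ⟨r, hr, rfl⟩ := Finset.mem_image.1 hμ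
    exact ((Finite.mem_toFinset hfin).1 hr).2
  ext y
  simp only [Finset.mem_image, Finite.mem_toFinset, mem_iUnion, mem_ofPred_eq, exists_prop]
  constructor
  · rintro ⟨hy, _, ⟨n, rfl⟩, rfl⟩
    obtain ⟨k, r, rfl, hr⟩ := exists_eq_add_nsmul_and_lt hb n
    rw [hsum] at hy ⊢
    exact ⟨_, ⟨r, ⟨hr, (hDk _ k).1 hy⟩, rfl⟩, k, rfl⟩
  · rintro ⟨_, ⟨r, ⟨-, hμ⟩, rfl⟩, k, rfl⟩
    exact ⟨(hDk _ k).2 hμ, _, ⟨r + k • b, rfl⟩, (hsum r k).symm⟩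

end RootDatum

theorem stmt13_general {V : Type*} [NormedAddCommGroup V] [NormedSpace ℝ V]
    {I : Type*} [Fintype I] [Nonempty I]
    (α : I → Module.Dual ℝ V) (coroot : I → V)
    (hli : LinearIndependent ℝ coroot)
    (a : I → ℤ) (ha : ∀ i, 0 < a i)
    (adual : I → ℤ) (hadual : ∀ i, 0 < adual i)
    (δ : Module.Dual ℝ V) (hδ : δ = ∑ i, (a i : ℝ) • α i)
    (hδc : ∀ j, δ (coroot j) = 0)
    (c : V) (hc : c = ∑ i, (adual i : ℝ) • coroot i)
    (hαc : ∀ i, α i c = 0)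
    (hker : ∀ v ∈ Submodule.span ℝ (Set.range coroot),
      (∀ i, α i v = 0) → ∃ s : ℝ, v = s • c)
    (Y : AddSubgroup V) (hQY : ∀ i, coroot i ∈ Y)
    (lam : V) :
    let Qp : Set V := {q | ∃ n : I → ℕ, q = ∑ i, (n i : ℝ) • coroot i}
    let Ypp : Set V := {y | y ∈ Y ∧ ∀ i, 0 ≤ α i y}
    let S : Set V := {y | y ∈ Ypp ∧ ∃ q ∈ Qp, y = lam - q}
    (S ⊆ {y ∈ Ypp | δ y = δ lam}) ∧
    ((⇑(Submodule.span ℝ {c}).mkQ) '' S).Finite ∧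
    (∃ F : Finset V, ↑F ⊆ Ypp ∧ S = ⋃ μ ∈ F, {x | ∃ n : ℕ, x = μ - (n : ℝ) • c}) := by
  intro Qp Ypp S
  obtain ⟨b, hbpos, hb⟩ : ∃ b : I → ℕ, (∀ i, 0 < b i) ∧ ∀ i, (b i : ℝ) = adual i :=
    ⟨fun i => (adual i).toNat, fun i => by simpa using hadual i,
      fun i => by exact_mod_cast Int.toNat_of_nonneg (hadual i).le⟩
  have hcb : c = ∑ i, (b i : ℝ) • coroot i := by simp only [hb, hc]
  have hcY : c ∈ Y := hc ▸ Y.sum_mem fun i _ => by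
    simpa only [Int.cast_smul_eq_zsmul] using Y.zsmul_mem (hQY i) (adual i)
  have hYpp : ∀ y, y + c ∈ Ypp ↔ y ∈ Ypp := fun y =>
    and_congr (Y.add_mem_cancel_right hcY) (by simp [hαc])
  obtain ⟨F, hFY, hSF⟩ := exists_finset_eq_biUnion_sub_natCast_smul coroot hbpos hcb hYpp lam <|
    (finite_setOf_exists_lt_and_forall_nonneg_apply_sub α coroot hli ha hδ hδc hbpos hcb hker
      lam).subset fun _ hr => ⟨hr.1, hr.2.2⟩
  refine ⟨?_, ?_, F, hFY, hSF⟩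
  · rintro y ⟨hy, q, ⟨n, rfl⟩, rfl⟩
    exact ⟨hy, by simp [map_sum, hδc]⟩
  · rw [show S = _ from hSF, image_mkQ_biUnion_sub_natCast_smul]
    exact F.finite_toSet.image _

/-- Section 2.12 (affine indecomposable case): let `δ = Σ a_i α_i` (all `a_i ∈ ℤ_{>0}`)
be the smallest positive imaginary root, vanishing on all coroots, and
`c = Σ a_i^∨ α_i^∨` (all `a_i^∨ ∈ ℤ_{>0}`) the canonical central element, with
`ℝc = ∩_i Ker α_i` inside the span of the coroots.  For a dominant `λ ∈ Y`, the set
`(λ - Q_+^∨) ∩ Y^{++}` is contained in `{y ∈ Y^{++} : δ(y) = δ(λ)}`, its image in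
`V/ℝc` is finite, and it is a finite union of sets `μ - ℤ_{≥0}·c` with `μ ∈ Y^{++}`. -/
theorem stmt13 {V : Type*} [NormedAddCommGroup V] [NormedSpace ℝ V]
    [FiniteDimensional ℝ V] {I : Type*} [Fintype I] [Nonempty I]
    (α : I → Module.Dual ℝ V) (coroot : I → V)
    (hli : LinearIndependent ℝ coroot)
    (a : I → ℤ) (ha : ∀ i, 0 < a i)
    (adual : I → ℤ) (hadual : ∀ i, 0 < adual i)
    (δ : Module.Dual ℝ V) (hδ : δ = ∑ i, (a i : ℝ) • α i)
    (hδc : ∀ j, δ (coroot j) = 0)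
    (c : V) (hc : c = ∑ i, (adual i : ℝ) • coroot i)
    (hαc : ∀ i, α i c = 0)
    (hker : ∀ v ∈ Submodule.span ℝ (Set.range coroot),
      (∀ i, α i v = 0) → ∃ s : ℝ, v = s • c)
    (Y : AddSubgroup V) (hQY : ∀ i, coroot i ∈ Y)
    (hdisc : ∀ C : ℝ, {y : V | y ∈ Y ∧ ‖y‖ ≤ C}.Finite)
    (lam : V) (hlamY : lam ∈ Y) (hlamdom : ∀ i, 0 ≤ α i lam) :
    let Qp : Set V := {q | ∃ n : I → ℕ, q = ∑ i, (n i : ℝ) • coroot i}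
    let Ypp : Set V := {y | y ∈ Y ∧ ∀ i, 0 ≤ α i y}
    let S : Set V := {y | y ∈ Ypp ∧ ∃ q ∈ Qp, y = lam - q}
    (S ⊆ {y ∈ Ypp | δ y = δ lam}) ∧
    ((⇑(Submodule.span ℝ {c}).mkQ) '' S).Finite ∧
    (∃ F : Finset V, ↑F ⊆ Ypp ∧ S = ⋃ μ ∈ F, {x | ∃ n : ℕ, x = μ - (n : ℝ) • c}) :=
  stmt13_general α coroot hli a ha adual hadual δ hδ hδc c hc hαc hker Y hQY lam
end

section
/- Let H be the R-module of R-valued functions on Y^{++} with almost finite support, with multiplication determined by c_λ * c_μ = Σ_ν m_{λ,μ}(ν) c_ν where each m_{λ,μ}(ν) ∈ ℤ_{≥0} is finite, m_{λ,μ}(ν) ≠ 0 implies ν ≤_{Q^∨} λ + μ, and m_{λ,0}(ν) = m_{0,λ}(ν) = δ_{λν}. Then this multiplication extends to all of H (all sums involved are finite), H is closed under it, and c_0 is a two-sided unit. -/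
/-!
Write `Q` for the `ℕ`-span of the coroots. Since the coroots are `ℝ₊`-free, the `ℕ`-expansions of
a fixed vector form an antichain in `ℕ^I`, hence a finite set by Dickson's lemma; so every interval
`{y | 0 ≤_Q y ≤_Q c}` is finite. If `λ = a - p` and `μ = b - q` with `a, b` from finite sets and
`ν ≤_Q λ + μ`, then both `p` and `q` lie in the interval below `a + b - ν`, which leaves finitely many
pairs `(λ, μ)`. Closure of almost finite supports and the unit laws are then bookkeeping.
-/

open scoped Classical
open Function

section NatSpan

variable {Y : Type*} [AddCommGroup Y] {I : Type*} [Fintype I]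

def natSpan (cr : I → Y) : Set Y := {q | ∃ n : I → ℕ, q = ∑ i, n i • cr i}

lemma zero_mem_natSpan (cr : I → Y) : 0 ∈ natSpan cr := ⟨0, by simp⟩

lemma add_mem_natSpan {cr : I → Y} {p q : Y} (hp : p ∈ natSpan cr) (hq : q ∈ natSpan cr) :
    p + q ∈ natSpan cr := by
  obtain ⟨n, rfl⟩ := hp
  obtain ⟨n', rfl⟩ := hq
  exact ⟨n + n', by simp only [Pi.add_apply, add_smul, Finset.sum_add_distrib]⟩

lemma finite_setOf_sum_nsmul_eq {V : Type*} [AddCommGroup V] [Module ℝ V] {v : I → V}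
    (hfree : ∀ a : I → ℝ, (∀ i, 0 ≤ a i) → ∑ i, a i • v i = 0 → ∀ i, a i = 0) (w : V) :
    {n : I → ℕ | ∑ i, n i • v i = w}.Finite := by
  refine IsAntichain.finite_of_partiallyWellOrderedOn ?_ (Set.isPWO_of_wellQuasiOrderedLE _)
  intro n hn n' hn' hne hle
  refine hne (funext fun i => ?_)
  have hdiff : ∑ i, ((n' i : ℝ) - n i) • v i = 0 := by
    simp only [sub_smul, Finset.sum_sub_distrib, Nat.cast_smul_eq_nsmul]
    rw [hn.out, hn'.out, sub_self]
  have := hfree _ (fun i => sub_nonneg.2 (Nat.cast_le.2 (hle i))) hdiff i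
  exact_mod_cast (sub_eq_zero.1 this).symm

lemma finite_setOf_mem_natSpan_and_sub_mem {V : Type*} [AddCommGroup V] [Module ℝ V]
    (ι : Y →+ V) {cr : I → Y}
    (hfree : ∀ a : I → ℝ, (∀ i, 0 ≤ a i) → ∑ i, a i • ι (cr i) = 0 → ∀ i, a i = 0) (c : Y) :
    {y | y ∈ natSpan cr ∧ c - y ∈ natSpan cr}.Finite := by
  refine (((finite_setOf_sum_nsmul_eq hfree (ι c)).lowerClosure).image
    fun n => ∑ i, n i • cr i).subset ?_
  rintro y ⟨⟨n, rfl⟩, n', hn'⟩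
  refine ⟨n, ⟨n + n', ?_, le_self_add⟩, rfl⟩
  rw [sub_eq_iff_eq_add'] at hn'
  simp only [Set.mem_ofPred_eq, hn', map_add, map_sum, map_nsmul, Pi.add_apply, add_smul,
    Finset.sum_add_distrib]

def IsAlmostFinite (cr : I → Y) (S : Set Y) : Prop :=
  ∃ s : Finset Y, ∀ y ∈ S, ∃ lam ∈ s, ∃ q ∈ natSpan cr, y = lam - q

variable {cr : I → Y} {S T : Set Y}

lemma IsAlmostFinite.subset (hT : IsAlmostFinite cr T) (hST : S ⊆ T) : IsAlmostFinite cr S :=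
  let ⟨s, hs⟩ := hT
  ⟨s, fun y hy => hs y (hST hy)⟩

lemma Set.Finite.isAlmostFinite (hS : S.Finite) : IsAlmostFinite cr S :=
  ⟨hS.toFinset, fun y hy => ⟨y, hS.mem_toFinset.2 hy, 0, zero_mem_natSpan cr, (sub_zero y).symm⟩⟩

lemma IsAlmostFinite.setOf_add_sub_mem (hS : IsAlmostFinite cr S) (hT : IsAlmostFinite cr T) :
    IsAlmostFinite cr {ν | ∃ lam ∈ S, ∃ mu ∈ T, lam + mu - ν ∈ natSpan cr} := by
  obtain ⟨s, hs⟩ := hS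
  obtain ⟨t, ht⟩ := hT
  refine ⟨(s ×ˢ t).image fun ab => ab.1 + ab.2, ?_⟩
  rintro ν ⟨lam, hlam, mu, hmu, hr⟩
  obtain ⟨a, ha, p, hp, rfl⟩ := hs lam hlam
  obtain ⟨b, hb, q, hq, rfl⟩ := ht mu hmu
  refine ⟨a + b, Finset.mem_image.2 ⟨(a, b), Finset.mem_product.2 ⟨ha, hb⟩, rfl⟩,
    p + q + (a - p + (b - q) - ν), add_mem_natSpan (add_mem_natSpan hp hq) hr, by abel⟩

lemma IsAlmostFinite.finite_setOf_add_sub_mem {V : Type*} [AddCommGroup V] [Module ℝ V]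
    (ι : Y →+ V)
    (hfree : ∀ a : I → ℝ, (∀ i, 0 ≤ a i) → ∑ i, a i • ι (cr i) = 0 → ∀ i, a i = 0)
    (hS : IsAlmostFinite cr S) (hT : IsAlmostFinite cr T) (ν : Y) :
    {p : Y × Y | p.1 ∈ S ∧ p.2 ∈ T ∧ p.1 + p.2 - ν ∈ natSpan cr}.Finite := by
  obtain ⟨s, hs⟩ := hS
  obtain ⟨t, ht⟩ := hT
  let K : Y → Set Y := fun c => {y | y ∈ natSpan cr ∧ c - y ∈ natSpan cr}
  have hsub : {p : Y × Y | p.1 ∈ S ∧ p.2 ∈ T ∧ p.1 + p.2 - ν ∈ natSpan cr} ⊆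
      ⋃ a ∈ (s : Set Y), ⋃ b ∈ (t : Set Y),
        (fun x : Y × Y => (a - x.1, b - x.2)) '' (K (a + b - ν) ×ˢ K (a + b - ν)) := by
    rintro ⟨lam, mu⟩ ⟨hlam, hmu, hr⟩
    obtain ⟨a, ha, p, hp, rfl⟩ := hs lam hlam
    obtain ⟨b, hb, q, hq, rfl⟩ := ht mu hmu
    dsimp only at hr
    -- `λ + μ - ν = r` with `r ∈ Q` forces `p, q ≤_{Q^∨} a + b - ν`
    have hpK : p ∈ K (a + b - ν) := ⟨hp, by
      convert add_mem_natSpan hq hr using 1; abel⟩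
    have hqK : q ∈ K (a + b - ν) := ⟨hq, by
      convert add_mem_natSpan hp hr using 1; abel⟩
    simp only [Set.mem_iUnion]
    exact ⟨a, ha, b, hb, (p, q), ⟨hpK, hqK⟩, rfl⟩
  refine Set.Finite.subset ?_ hsub
  refine s.finite_toSet.biUnion fun a _ => t.finite_toSet.biUnion fun b _ => ?_
  have hK := finite_setOf_mem_natSpan_and_sub_mem ι hfree (a + b - ν)
  exact (hK.prod hK).image _

end NatSpan

section StructMul

variable {Y R : Type*} [Semiring R] (m : Y → Y → Y → ℕ)

noncomputable def structMul (f g : Y → R) (ν : Y) : R :=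
  ∑ᶠ p : Y × Y, f p.1 * g p.2 * (m p.1 p.2 ν : R)

lemma ne_zero_of_mul_mul_natCast_ne_zero {a b : R} {k : ℕ} (h : a * b * k ≠ 0) :
    a ≠ 0 ∧ b ≠ 0 ∧ k ≠ 0 :=
  ⟨left_ne_zero_of_mul (left_ne_zero_of_mul h), right_ne_zero_of_mul (left_ne_zero_of_mul h),
    by rintro rfl; simp at h⟩

variable {m}

lemma exists_ne_zero_of_structMul_ne_zero {f g : Y → R} {ν : Y} (h : structMul m f g ν ≠ 0) :
    ∃ lam mu, f lam ≠ 0 ∧ g mu ≠ 0 ∧ m lam mu ν ≠ 0 := by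
  obtain ⟨p, hp⟩ := not_forall.1 (mt finsum_eq_zero_of_forall_eq_zero h)
  exact ⟨p.1, p.2, ne_zero_of_mul_mul_natCast_ne_zero hp⟩

lemma structMul_delta_right [Zero Y] (hunitr : ∀ lam ν, m lam 0 ν = if ν = lam then 1 else 0)
    (f : Y → R) : structMul m f (fun y => if y = 0 then 1 else 0) = f := by
  funext ν
  rw [structMul, finsum_eq_single _ (ν, 0)]
  · simp [hunitr]
  · rintro ⟨lam, mu⟩ hne
    by_cases hmu : mu = 0
    · subst hmu
      simp [hunitr, Ne.symm (fun h => hne (h ▸ rfl) : lam ≠ ν)]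
    · simp [hmu]

lemma structMul_delta_left [Zero Y] (hunitl : ∀ lam ν, m 0 lam ν = if ν = lam then 1 else 0)
    (f : Y → R) : structMul m (fun y => if y = 0 then 1 else 0) f = f := by
  funext ν
  rw [structMul, finsum_eq_single _ (0, ν)]
  · simp [hunitl]
  · rintro ⟨lam, mu⟩ hne
    by_cases hlam : lam = 0
    · subst hlam
      simp [hunitl, Ne.symm (fun h => hne (h ▸ rfl) : mu ≠ ν)]
    · simp [hlam]

end StructMul

/-- Theorem 2.6 (abstract form): let `H` be the `R`-module of `R`-valued functions on
`Y^{++}` with almost finite support, with multiplication determined by structure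
constants `m λ μ ν ∈ ℤ_{≥0}` satisfying `m λ μ ν ≠ 0 → ν ≤_{Q^∨} λ + μ` and
`m λ 0 ν = m 0 λ ν = δ_{λν}`.  Then the multiplication
`(f*g)(ν) = Σ_{λ,μ} f(λ) g(μ) m λ μ ν` is everywhere defined (the sums are finite),
`H` is closed under it, and `c_0` (the indicator of `0`) is a two-sided unit. -/
theorem stmt15 {V : Type*} [AddCommGroup V] [Module ℝ V]
    {Y : Type*} [AddCommGroup Y] (ι : Y →+ V)
    {I : Type*} [Fintype I] (cr : I → Y)
    (hfree : ∀ a : I → ℝ, (∀ i, 0 ≤ a i) → ∑ i, a i • ι (cr i) = 0 → ∀ i, a i = 0)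
    (R : Type*) [CommRing R]
    (Ypp : Set Y) (h0 : (0 : Y) ∈ Ypp)
    (m : Y → Y → Y → ℕ)
    (hmle : ∀ lam mu ν, m lam mu ν ≠ 0 → ∃ q : I → ℕ, lam + mu = ν + ∑ i, q i • cr i)
    (hmY : ∀ lam mu ν, m lam mu ν ≠ 0 → ν ∈ Ypp)
    (hunitr : ∀ lam ν, m lam 0 ν = if ν = lam then 1 else 0)
    (hunitl : ∀ lam ν, m 0 lam ν = if ν = lam then 1 else 0) :
    let Qp : Set Y := {q | ∃ n : I → ℕ, q = ∑ i, n i • cr i}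
    let AF : (Y → R) → Prop := fun f => (∀ y, f y ≠ 0 → y ∈ Ypp) ∧
      ∃ s : Finset Y, ∀ y, f y ≠ 0 → ∃ lam ∈ s, ∃ q ∈ Qp, y = lam - q
    let mul : (Y → R) → (Y → R) → (Y → R) :=
      fun f g ν => ∑ᶠ p : Y × Y, f p.1 * g p.2 * (m p.1 p.2 ν : R)
    let c0 : Y → R := fun y => if y = 0 then 1 else 0
    (∀ f g : Y → R, AF f → AF g → ∀ ν : Y,
        {p : Y × Y | f p.1 * g p.2 * (m p.1 p.2 ν : R) ≠ 0}.Finite) ∧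
    (∀ f g : Y → R, AF f → AF g → AF (mul f g)) ∧
    AF c0 ∧
    (∀ f : Y → R, AF f → mul f c0 = f ∧ mul c0 f = f) := by
  intro Qp AF mul c0
  have hle : ∀ lam mu ν, m lam mu ν ≠ 0 → lam + mu - ν ∈ natSpan cr := fun lam mu ν hm =>
    let ⟨q, hq⟩ := hmle lam mu ν hm
    ⟨q, sub_eq_of_eq_add' hq⟩
  have hc0 : support c0 ⊆ {0} := fun y hy => of_not_not fun h => hy (if_neg h)
  refine ⟨fun f g hf hg ν => ?_, fun f g hf hg => ⟨?_, ?_⟩,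
    ⟨fun y hy => Set.mem_singleton_iff.1 (hc0 hy) ▸ h0, (Set.finite_singleton 0).isAlmostFinite.subset hc0⟩,
    fun f _ => ⟨structMul_delta_right hunitr f, structMul_delta_left hunitl f⟩⟩
  · refine (IsAlmostFinite.finite_setOf_add_sub_mem ι hfree hf.2 hg.2 ν).subset fun p hp => ?_
    obtain ⟨hfp, hgp, hm⟩ := ne_zero_of_mul_mul_natCast_ne_zero hp
    exact ⟨hfp, hgp, hle _ _ _ hm⟩
  · intro ν hν
    obtain ⟨lam, mu, -, -, hm⟩ := exists_ne_zero_of_structMul_ne_zero hν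
    exact hmY lam mu ν hm
  · refine (IsAlmostFinite.setOf_add_sub_mem hf.2 hg.2).subset fun ν hν => ?_
    obtain ⟨lam, mu, hfl, hgm, hm⟩ := exists_ne_zero_of_structMul_ne_zero hν
    exact ⟨lam, hfl, mu, hgm, hle _ _ _ hm⟩
end
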